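/- Adding a vertex (together with any set of arcs incident to it) to a simple digraph increases the throttling number by at most one, and deleting a vertex from a simple digraph changes the throttling number by at most one in either direction. -/

import Mathlib

/-!
Both inequalities come from simulating a forcing process on one digraph by a process on the
other with the same number of steps. Going from `A` to `A'`, colour the new vertex `none` blue
from the start: it then never hinders a force, so every force of `A` is still valid in `A'`.
Going from `A'` back to `A`, the only forces that are lost are those performed by `none`;
since the blue set only grows, `none` forces at most once, so adding that single vertex to
the initial set of `A` restores every lost force.
-/

open Set

/-- One time step of standard zero forcing on a digraph with arc relation `A`:
every blue vertex having a unique white out-neighbor forces it blue. -/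
def dstep {V : Type*} (A : V → V → Prop) (S : Set V) : Set V :=
  S ∪ {w | ∃ u ∈ S, A u w ∧ ∀ x, A u x → x ∉ S → x = w}

/-- `B` is a zero forcing set of the digraph with arc relation `A`. -/
def IsZFS {V : Type*} (A : V → V → Prop) (B : Set V) : Prop :=
  ∃ t, (dstep A)^[t] B = Set.univ

/-- Propagation time of `B` in the digraph with arc relation `A`. -/
noncomputable def dpt {V : Type*} (A : V → V → Prop) (B : Set V) : ℕ :=
  sInf {t | (dstep A)^[t] B = Set.univ}

/-- The throttling number of the digraph with arc relation `A`. -/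
noncomputable def dth {V : Type*} (A : V → V → Prop) : ℕ :=
  sInf {k | ∃ B : Set V, IsZFS A B ∧ k = B.ncard + dpt A B}

theorem Monotone.map_iterate_le_iterate_map {α β : Type*} [Preorder β] {f : α → α} {g : β → β}
    (hg : Monotone g) (φ : α → β) (x : α) (h : ∀ k, φ (f (f^[k] x)) ≤ g (φ (f^[k] x))) :
    ∀ k, φ (f^[k] x) ≤ g^[k] (φ x)
  | 0 => le_rfl
  | k + 1 => by
    rw [Function.iterate_succ_apply', Function.iterate_succ_apply']
    exact (h k).trans (hg (hg.map_iterate_le_iterate_map φ x h k))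

theorem Set.ncard_preimage_some_le {α : Type*} (s : Set (Option α)) :
    (some ⁻¹' s).ncard ≤ s.ncard := by
  have hs : some ⁻¹' s = some ⁻¹' (s \ {none}) := by ext; simp
  rw [hs, ncard_preimage_of_injective_subset_range (Option.some_injective α)]
  · exact ncard_sdiff_singleton_le s none
  · rintro (_ | a) ⟨-, h⟩
    exacts [absurd rfl h, ⟨a, rfl⟩]

section ZeroForcing

variable {V : Type*} {A : V → V → Prop}

theorem monotone_dstep : Monotone (dstep A) := by
  rintro S T hST w (hw | ⟨u, hu, huw, huniq⟩)
  · exact Or.inl (hST hw)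
  · by_cases hwT : w ∈ T
    · exact Or.inl hwT
    · exact Or.inr ⟨u, hST hu, huw, fun x hux hxT => huniq x hux fun hxS => hxT (hST hxS)⟩

theorem subset_dstep (S : Set V) : S ⊆ dstep A S := subset_union_left

theorem monotone_iterate_dstep (S : Set V) : Monotone fun k => (dstep A)^[k] S :=
  monotone_nat_of_le_succ fun k => by
    rw [Function.iterate_succ_apply']
    exact subset_dstep _

theorem exists_iterate_dstep_eq_univ_and_dth_eq (A : V → V → Prop) :
    ∃ B : Set V, ∃ t, (dstep A)^[t] B = univ ∧ dth A = B.ncard + t := by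
  obtain ⟨B, hB, hdth⟩ : ∃ B : Set V, IsZFS A B ∧ dth A = B.ncard + dpt A B :=
    Nat.sInf_mem (s := {k | ∃ B : Set V, IsZFS A B ∧ k = B.ncard + dpt A B})
      ⟨_, univ, ⟨0, rfl⟩, rfl⟩
  exact ⟨B, dpt A B, Nat.sInf_mem hB, hdth⟩

theorem dth_le_of_iterate_dstep_eq_univ {B : Set V} {t : ℕ} (h : (dstep A)^[t] B = univ) :
    dth A ≤ B.ncard + t := by
  have hdth : dth A ≤ B.ncard + dpt A B := Nat.sInf_le ⟨B, ⟨t, h⟩, rfl⟩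
  have hdpt : dpt A B ≤ t := Nat.sInf_le h
  omega

def forcedAlong (A : V → V → Prop) (S : ℕ → Set V) (u : V) : Set V :=
  {w | ∃ k, w ∉ S k ∧ A u w ∧ ∀ x, A u x → x ∉ S k → x = w}

theorem subsingleton_forcedAlong {S : ℕ → Set V} (hS : Monotone S) (u : V) :
    (forcedAlong A S u).Subsingleton := by
  rintro w₁ ⟨k₁, hw₁, hu₁, huniq₁⟩ w₂ ⟨k₂, hw₂, hu₂, huniq₂⟩
  rcases le_total k₁ k₂ with hk | hk
  · exact (huniq₁ w₂ hu₂ fun h => hw₂ (hS hk h)).symm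
  · exact huniq₂ w₁ hu₁ fun h => hw₁ (hS hk h)

end ZeroForcing

section OptionDigraph

variable {V : Type*} {A : V → V → Prop} {A' : Option V → Option V → Prop}

theorem insert_none_image_dstep_subset (hext : ∀ u v : V, A' (some u) (some v) ↔ A u v)
    (S : Set V) : insert none (some '' dstep A S) ⊆ dstep A' (insert none (some '' S)) := by
  rintro _ (rfl | ⟨w, hw | ⟨u, hu, huw, huniq⟩, rfl⟩)
  · exact subset_dstep _ (mem_insert _ _)
  · exact subset_dstep _ (mem_insert_of_mem _ (mem_image_of_mem _ hw))
  · refine Or.inr ⟨some u, mem_insert_of_mem _ (mem_image_of_mem _ hu), (hext u w).2 huw, ?_⟩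
    rintro (_ | x) hux hx
    · exact absurd (mem_insert _ _) hx
    · exact congrArg some <| huniq x ((hext u x).1 hux) fun h =>
        hx (mem_insert_of_mem _ (mem_image_of_mem _ h))

theorem preimage_some_dstep_union_subset (hext : ∀ u v : V, A' (some u) (some v) ↔ A u v)
    {T : Set (Option V)} {W : Set V}
    (hW : ∀ w, some w ∉ T → A' none (some w) → (∀ x, A' none x → x ∉ T → x = some w) → w ∈ W) :
    some ⁻¹' dstep A' T ∪ W ⊆ dstep A (some ⁻¹' T ∪ W) := by
  rintro w ((hw | ⟨_ | u, hu, huw, huniq⟩) | hw)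
  · exact subset_dstep _ (Or.inl hw)
  · by_cases hwT : some w ∈ T
    · exact subset_dstep _ (Or.inl hwT)
    · exact subset_dstep _ (Or.inr (hW w hwT huw huniq))
  · refine Or.inr ⟨u, Or.inl hu, (hext u w).1 huw, fun x hux hx => ?_⟩
    exact Option.some_injective V <| huniq (some x) ((hext u x).2 hux) fun h => hx (Or.inl h)
  · exact subset_dstep _ (Or.inr hw)

theorem dth_option_le_dth_add_one (hext : ∀ u v : V, A' (some u) (some v) ↔ A u v) :
    dth A' ≤ dth A + 1 := by
  obtain ⟨B, t, hBt, hdth⟩ := exists_iterate_dstep_eq_univ_and_dth_eq A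
  have hsim := monotone_dstep.map_iterate_le_iterate_map (fun S => insert none (some '' S)) B
    (fun _ => insert_none_image_dstep_subset hext _) t
  have huniv : (dstep A')^[t] (insert none (some '' B)) = univ := by
    rw [hBt, image_univ, insert_none_range_some] at hsim
    exact univ_subset_iff.1 hsim
  calc dth A' ≤ (insert none (some '' B)).ncard + t := dth_le_of_iterate_dstep_eq_univ huniv
    _ ≤ B.ncard + 1 + t := by
      grw [ncard_insert_le, ncard_image_of_injective _ (Option.some_injective V)]
    _ = dth A + 1 := by omega

theorem dth_le_dth_option_add_one (hext : ∀ u v : V, A' (some u) (some v) ↔ A u v) :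
    dth A ≤ dth A' + 1 := by
  obtain ⟨B', t, hBt, hdth⟩ := exists_iterate_dstep_eq_univ_and_dth_eq A'
  let W := some ⁻¹' forcedAlong A' (fun k => (dstep A')^[k] B') none
  have hW : W.Subsingleton :=
    (subsingleton_forcedAlong (monotone_iterate_dstep B') none).preimage (Option.some_injective V)
  have hsim := monotone_dstep.map_iterate_le_iterate_map (fun T => some ⁻¹' T ∪ W) B'
    (fun k => preimage_some_dstep_union_subset hext fun w hwT huw huniq => ⟨k, hwT, huw, huniq⟩) t
  have huniv : (dstep A)^[t] (some ⁻¹' B' ∪ W) = univ := by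
    simp only [hBt, preimage_univ, univ_union] at hsim
    exact univ_subset_iff.1 hsim
  calc dth A ≤ (some ⁻¹' B' ∪ W).ncard + t := dth_le_of_iterate_dstep_eq_univ huniv
    _ ≤ B'.ncard + 1 + t := by
      grw [ncard_union_le, ncard_preimage_some_le, (ncard_le_one hW.finite).2 hW]
    _ = dth A' + 1 := by omega

end OptionDigraph

theorem stmt6_general {V : Type*} (A : V → V → Prop)
    (A' : Option V → Option V → Prop)
    (hext : ∀ u v : V, A' (some u) (some v) ↔ A u v) :
    dth A' ≤ dth A + 1 ∧ dth A ≤ dth A' + 1 :=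
  ⟨dth_option_le_dth_add_one hext, dth_le_dth_option_add_one hext⟩

/-- Adding a vertex (with any arcs incident to it) increases the throttling number by at
most one, and deleting a vertex changes the throttling number by at most one in either
direction. -/
theorem stmt6 {V : Type*} [Fintype V] (A : V → V → Prop) (hirr : Irreflexive A)
    (A' : Option V → Option V → Prop)
    (hext : ∀ u v : V, A' (some u) (some v) ↔ A u v)
    (hloop : ¬ A' none none) :
    dth A' ≤ dth A + 1 ∧ dth A ≤ dth A' + 1 :=
  stmt6_general A A' hext
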